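/- Suppose Tab(λ/μ) is the set of standard skew tableaux of a horizontal strip λ/μ with rows of lengths b_1,…,b_t. Working over ℝ with Young's orthonormal basis {Φ_T : T ∈ Tab(λ/μ)} of S^{λ/μ}, the one-dimensional space of S_{b−a}-invariants is spanned by the unique element of the form Σ_{T ∈ Tab(λ/μ)} β_T Φ_T with β_{T^rev} = 1; its coefficients satisfy: whenever T'' = s_i T' with both T', T'' standard, β_{T''}/β_{T'} = √((r−1)/(r+1)) where r = r_i(T') ∉ {−1, 0, 1} is the axial distance from i+1 to i in T'. In particular all β_T are nonzero. -/

import Mathlib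

open scoped Classical

/-- A partition: a weakly decreasing sequence of naturals that is eventually zero. -/
def IsPartition (l : ℕ → ℕ) : Prop := Antitone l ∧ ∃ N, ∀ i, N ≤ i → l i = 0

/-- The cells (Young diagram) of a partition, indexed by (row, column), 0-indexed. -/
def cells (l : ℕ → ℕ) : Set (ℕ × ℕ) := {p | p.2 < l p.1}

/-- Containment of (the Young diagrams of) partitions: `m ⊆ l`. -/
def SubDiagram (m l : ℕ → ℕ) : Prop := ∀ i, m i ≤ l i

/-- The skew diagram `l / m`. -/
def skewCells (l m : ℕ → ℕ) : Set (ℕ × ℕ) := cells l \ cells m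

/-- A set of cells is a horizontal strip if each column contains at most one cell. -/
def IsHorizontalStrip (s : Set (ℕ × ℕ)) : Prop :=
  ∀ p ∈ s, ∀ q ∈ s, p.2 = q.2 → p = q

/-- A set of cells is a vertical strip if each row contains at most one cell. -/
def IsVerticalStrip (s : Set (ℕ × ℕ)) : Prop :=
  ∀ p ∈ s, ∀ q ∈ s, p.1 = q.1 → p = q

/-- `λ̄`: the partition obtained from `λ` by deleting its first row. -/
def rowBar (l : ℕ → ℕ) : ℕ → ℕ := fun i => l (i + 1)

/-- `λ'`: the partition obtained from `λ` by deleting its first column. -/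
def colBar (l : ℕ → ℕ) : ℕ → ℕ := fun i => l i - 1

/-- The transpose (conjugate) partition. -/
noncomputable def transposeP (l : ℕ → ℕ) : ℕ → ℕ := fun j => Set.ncard {i | j < l i}

/-- `λ ⊢ n`: a partition of `n`. -/
def IsPartitionOfSize (l : ℕ → ℕ) (n : ℕ) : Prop := IsPartition l ∧ (cells l).ncard = n

/-- intersection of partitions (componentwise min / intersection of diagrams) -/
def interP (l m : ℕ → ℕ) : ℕ → ℕ := fun i => min (l i) (m i)

/-- A standard skew tableau of shape `l/m` with entries `1,…,n` (taking the value `0`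
outside the skew diagram): a bijective labelling of the cells of `l/m` by `{1,…,n}`
which increases along rows and down columns. Taking `m = 0` gives standard Young
tableaux of shape `l`. -/
def IsSkewSYT (l m : ℕ → ℕ) (n : ℕ) (t : ℕ × ℕ → ℕ) : Prop :=
  Set.BijOn t (skewCells l m) (Set.Icc 1 n) ∧
  (∀ p, p ∉ skewCells l m → t p = 0) ∧
  (∀ p ∈ skewCells l m, ∀ q ∈ skewCells l m, p.1 = q.1 → p.2 < q.2 → t p < t q) ∧
  (∀ p ∈ skewCells l m, ∀ q ∈ skewCells l m, p.2 = q.2 → p.1 < q.1 → t p < t q)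

open Equiv

/-- `Fin a` is equivalent to the subtype of `Fin b` of elements `< a`. -/
def finCastEquiv (a b : ℕ) (hab : a ≤ b) : Fin a ≃ {x : Fin b // (x : ℕ) < a} where
  toFun i := ⟨⟨i, lt_of_lt_of_le i.isLt hab⟩, i.isLt⟩
  invFun x := ⟨x.1, x.2⟩
  left_inv _ := rfl
  right_inv _ := rfl

/-- The inclusion `S_a ⊆ S_b` (extending a permutation of `{0,…,a-1}` by the identity). -/
def extPerm {a b : ℕ} (hab : a ≤ b) : Equiv.Perm (Fin a) →* Equiv.Perm (Fin b) :=
  Equiv.Perm.extendDomainHom (finCastEquiv a b hab)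

/-- `(g,h) • f = g ∘ f ∘ h⁻¹` on injections `Fin a ↪ Fin b`. -/
def injSmul {a b : ℕ} (g : Equiv.Perm (Fin b) × Equiv.Perm (Fin a))
    (f : Fin a ↪ Fin b) : Fin a ↪ Fin b :=
  ((g.2⁻¹.toEmbedding).trans f).trans g.1.toEmbedding

@[simp] theorem injSmul_apply {a b : ℕ} (g : Equiv.Perm (Fin b) × Equiv.Perm (Fin a))
    (f : Fin a ↪ Fin b) (x : Fin a) : injSmul g f x = g.1 (f (g.2⁻¹ x)) := rfl

/-- The action of `S_b × S_a` on injections `Fin a ↪ Fin b`. -/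
instance injMulAction (a b : ℕ) :
    MulAction (Equiv.Perm (Fin b) × Equiv.Perm (Fin a)) (Fin a ↪ Fin b) where
  smul := injSmul
  one_smul f := Function.Embedding.ext fun x => by
    show injSmul 1 f x = f x
    simp
  mul_smul g h f := Function.Embedding.ext fun x => by
    show injSmul _ f _ = injSmul g (injSmul h f) x
    simp [Equiv.Perm.mul_apply, mul_inv_rev]

theorem injSmul_def (a b : ℕ) (g : Equiv.Perm (Fin b) × Equiv.Perm (Fin a))
    (f : Fin a ↪ Fin b) : g • f = injSmul g f := rfl

open Equiv TensorProduct

/-- Functions `Fin n → ℕ` whose fiber over `j` has cardinality `l j`; the `S_n`-set whose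
permutation module is the Young module `M^l` (induced from the trivial module of the
Young subgroup of shape `l`). -/
def YoungSet (n : ℕ) (l : ℕ → ℕ) : Type :=
  {f : Fin n → ℕ // ∀ j, (Finset.univ.filter (fun i => f i = j)).card = l j}

instance youngAction (n : ℕ) (l : ℕ → ℕ) :
    MulAction (Equiv.Perm (Fin n)) (YoungSet n l) where
  smul g f := ⟨fun i => f.1 (g⁻¹ i), by
    intro j
    rw [← f.2 j]
    apply Finset.card_bij (fun i _ => g⁻¹ i)
    · intro i hi
      simp only [Finset.mem_filter, Finset.mem_univ, true_and] at hi ⊢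
      exact hi
    · intro i _ i' _ h
      exact g⁻¹.injective h
    · intro i hi
      simp only [Finset.mem_filter, Finset.mem_univ, true_and] at hi ⊢
      exact ⟨g i, by simpa using hi, by simp⟩⟩
  one_smul f := Subtype.ext (funext fun i => by
    show f.1 ((1 : Equiv.Perm (Fin n))⁻¹ i) = f.1 i
    simp)
  mul_smul g h f := Subtype.ext (funext fun i => by
    show f.1 ((g * h)⁻¹ i) = f.1 (h⁻¹ (g⁻¹ i))
    simp [mul_inv_rev, Equiv.Perm.mul_apply])

/-- The (characterizing) property of being the Specht module `S^l` of `S_n` over `k`: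
an irreducible module admitting a nonzero equivariant map to the Young permutation
module `M^l`, and a nonzero sign-twisted equivariant map to `M^{lᵗ}`.  In characteristic
zero this characterizes `S^l` up to isomorphism, with the convention that `S^{(n)}` is
trivial and `S^{(1ⁿ)}` is the sign representation. -/
def IsSpechtRep (k : Type) [Field k] {n : ℕ} {V : Type} [AddCommGroup V] [Module k V]
    (ρ : Representation k (Equiv.Perm (Fin n)) V) (l : ℕ → ℕ) : Prop :=
  IsSimpleModule (MonoidAlgebra k (Equiv.Perm (Fin n))) ρ.asModule ∧
  (∃ φ : V →ₗ[k] (YoungSet n l →₀ k), φ ≠ 0 ∧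
    ∀ g v, φ (ρ g v) =
      Finsupp.lmapDomain k k (fun x : YoungSet n l => g • x) (φ v)) ∧
  (∃ ψ : V →ₗ[k] (YoungSet n (transposeP l) →₀ k), ψ ≠ 0 ∧
    ∀ g v, ψ (ρ g v) = ((Equiv.Perm.sign g : ℤ) : k) •
      Finsupp.lmapDomain k k (fun x : YoungSet n (transposeP l) => g • x) (ψ v))

/-- The exterior tensor product `ρ ⊠ σ` of representations of `G` and `H`,
a representation of `G × H`. -/
noncomputable def boxtimes {k G H V W : Type} [CommRing k] [Monoid G] [Monoid H]
    [AddCommGroup V] [Module k V] [AddCommGroup W] [Module k W]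
    (ρ : Representation k G V) (σ : Representation k H W) :
    Representation k (G × H) (TensorProduct k V W) :=
  Representation.tprod (ρ.comp (MonoidHom.fst G H)) (σ.comp (MonoidHom.snd G H))

/-- The submodule of vectors invariant under the action of a subset `S` of the group. -/
def invariantsUnder {k G V : Type} [CommRing k] [Monoid G] [AddCommGroup V] [Module k V]
    (ρ : Representation k G V) (S : Set G) : Submodule k V where
  carrier := {v | ∀ g ∈ S, ρ g v = v}
  add_mem' := by
    intro x y hx hy g hg
    rw [map_add, hx g hg, hy g hg]
  zero_mem' := by
    intro g hg
    rw [map_zero]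
  smul_mem' := by
    intro c x hx g hg
    rw [map_smul, hx g hg]


/-!
Write `r` for the axial distance from `j + 1` to `j` in `T`. Applying `s_j` to `∑ c_T Φ_T` and
comparing coefficients shows that the sum is `s_j`-invariant iff `c_{s_j T} = √((r-1)/(r+1)) c_T`
whenever `s_j T` is standard: if `j, j + 1` share a row then `r = 1` and `s_j` fixes `Φ_T`, and
otherwise the identity `√(1 - r⁻²) · √((r-1)/(r+1)) = 1 - r⁻¹` turns the coefficient equation into
this recursion.

In a horizontal strip every lower row lies strictly to the left of the rows above it, so the content
order of cells is their column order, and `|r| ≥ 2` whenever `s_j T` is standard. The product of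
`√((d-1)/(d+1))` over the inversions of `T` (pairs of cells whose left cell carries the larger
entry, `d` their content difference) satisfies the recursion, because an adjacent swap adds or
removes exactly one inversion and the factors for `d` and `-d` are reciprocal. Conversely `T^rev` is
the only tableau without inversions, and any other tableau has an adjacent descent whose swap
removes an inversion; hence the recursion determines `c` from `c_{T^rev}`.
-/

open Function Equiv

noncomputable def axialFactor (r : ℝ) : ℝ := √((r - 1) / (r + 1))

section AxialFactor

variable {r : ℝ}

theorem inv_sq_lt_one_of_one_lt_abs (hr : 1 < |r|) : r⁻¹ ^ 2 < 1 := by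
  rw [inv_pow]
  exact inv_lt_one_of_one_lt₀ ((one_lt_sq_iff_one_lt_abs r).2 hr)

theorem axialFactor_pos (hr : 1 < |r|) : 0 < axialFactor r := by
  apply Real.sqrt_pos.2
  rcases lt_abs.1 hr with h | h
  · exact div_pos (by linarith) (by linarith)
  · exact div_pos_of_neg_of_neg (by linarith) (by linarith)

theorem axialFactor_mul_axialFactor_neg (hr : 1 < |r|) :
    axialFactor r * axialFactor (-r) = 1 := by
  have hr₁ : r + 1 ≠ 0 := by rcases lt_abs.1 hr with h | h <;> intro <;> linarith
  have hr₂ : -r + 1 ≠ 0 := by rcases lt_abs.1 hr with h | h <;> intro <;> linarith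
  rw [axialFactor, axialFactor, ← Real.sqrt_mul (Real.sqrt_pos.1 (axialFactor_pos hr)).le,
    show (r - 1) / (r + 1) * ((-r - 1) / (-r + 1)) = 1 by field_simp; ring, Real.sqrt_one]

theorem sqrt_one_sub_inv_sq_mul_axialFactor (hr : 1 < |r|) :
    √(1 - r⁻¹ ^ 2) * axialFactor r = 1 - r⁻¹ := by
  have hr₀ : r ≠ 0 := by rintro rfl; norm_num at hr
  have hr₁ : r + 1 ≠ 0 := by rcases lt_abs.1 hr with h | h <;> intro <;> linarith
  have hsq := inv_sq_lt_one_of_one_lt_abs hr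
  have hinv : r⁻¹ < 1 := (abs_lt.1 ((sq_lt_one_iff_abs_lt_one _).1 hsq)).2
  rw [axialFactor, ← Real.sqrt_mul (by linarith),
    show (1 - r⁻¹ ^ 2) * ((r - 1) / (r + 1)) = (1 - r⁻¹) ^ 2 by field_simp; ring,
    Real.sqrt_sq (by linarith)]

theorem inv_mul_add_sqrt_mul_eq_iff {x y : ℝ} (hr : 1 < |r|) :
    r⁻¹ * x + √(1 - r⁻¹ ^ 2) * y = x ↔ y = axialFactor r * x := by
  have key := sqrt_one_sub_inv_sq_mul_axialFactor hr
  have hs : √(1 - r⁻¹ ^ 2) ≠ 0 :=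
    (Real.sqrt_pos.2 (by linarith [inv_sq_lt_one_of_one_lt_abs hr])).ne'
  constructor
  · intro h
    apply mul_left_cancel₀ hs
    linear_combination h - x * key
  · rintro rfl
    linear_combination x * key

theorem one_lt_abs_intCast {a : ℤ} (h : 2 ≤ |a|) : 1 < |(a : ℝ)| := by
  have : (2 : ℝ) ≤ |(a : ℝ)| := by exact_mod_cast h
  linarith

end AxialFactor

theorem apply_eq_self_of_adjacent_swaps {k V : Type*} [CommSemiring k] [AddCommMonoid V]
    [Module k V] {N : ℕ} (ρ : Representation k (Perm (Fin N)) V) {v : V}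
    (h : ∀ (j : ℕ) (hj : 1 ≤ j) (hjN : j < N), ρ (swap ⟨j - 1, by omega⟩ ⟨j, hjN⟩) v = v)
    (g : Perm (Fin N)) : ρ g v = v := by
  cases N with
  | zero => rw [Subsingleton.elim g 1, map_one, Module.End.one_apply]
  | succ N =>
    have hg : g ∈ Submonoid.closure (Set.range fun i : Fin N => swap i.castSucc i.succ) := by
      rw [Perm.mclosure_swap_castSucc_succ]
      trivial
    induction hg using Submonoid.closure_induction with
    | mem x hx =>
      obtain ⟨i, rfl⟩ := hx
      exact h (i + 1) (by omega) (by omega)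
    | one => rw [map_one, Module.End.one_apply]
    | mul x y _ _ hx hy => rw [map_mul, Module.End.mul_apply, hy, hx]

theorem map_sum_smul_of_involutive {ι R V : Type*} [Fintype ι] [CommSemiring R]
    [AddCommMonoid V] [Module R V] (f : V →ₗ[R] V) (Φ : ι → V) {σ : ι → ι}
    (hσ : Involutive σ) (α γ : ι → R) (hγ : ∀ i, γ (σ i) = γ i)
    (hf : ∀ i, f (Φ i) = α i • Φ i + γ i • Φ (σ i)) (c : ι → R) :
    f (∑ i, c i • Φ i) = ∑ i, (α i * c i + γ i * c (σ i)) • Φ i := by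
  have hreindex : ∑ i, (c i * γ i) • Φ (σ i) = ∑ i, (γ i * c (σ i)) • Φ i := by
    rw [← Equiv.sum_comp (hσ.toPerm σ)]
    simp only [Involutive.coe_toPerm, hγ, hσ _, mul_comm]
  simp only [map_sum, map_smul, hf, smul_add, smul_smul, Finset.sum_add_distrib, hreindex,
    add_smul]
  simp only [mul_comm]

theorem swap_lt_swap_iff {a b v : ℕ} (h₁ : ¬(a = v ∧ b = v + 1)) (h₂ : ¬(a = v + 1 ∧ b = v)) :
    swap v (v + 1) a < swap v (v + 1) b ↔ a < b := by
  simp only [swap_apply_def]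
  split_ifs <;> omega

theorem swap_comp_swap_comp {α : Type*} (v : ℕ) (t : α → ℕ) :
    swap v (v + 1) ∘ (swap v (v + 1) ∘ t) = t :=
  funext fun _ => swap_apply_self _ _ _

abbrev SkewSYT (l m : ℕ → ℕ) (n : ℕ) : Type := {t : ℕ × ℕ → ℕ // IsSkewSYT l m n t}

def content (x : ℕ × ℕ) : ℤ := x.2 - x.1

noncomputable def cellOf (l m : ℕ → ℕ) (t : ℕ × ℕ → ℕ) (v : ℕ) : ℕ × ℕ :=
  invFunOn t (skewCells l m) v

noncomputable def axialDist (l m : ℕ → ℕ) (t : ℕ × ℕ → ℕ) (j : ℕ) : ℤ :=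
  content (cellOf l m t (j + 1)) - content (cellOf l m t j)

def IncreasingLeftToRight (l m : ℕ → ℕ) (t : ℕ × ℕ → ℕ) : Prop :=
  ∀ p ∈ skewCells l m, ∀ q ∈ skewCells l m, p.2 < q.2 → t p < t q

variable {l m : ℕ → ℕ} {n : ℕ} {t : ℕ × ℕ → ℕ} {p q : ℕ × ℕ} {v : ℕ}

theorem mem_skewCells : p ∈ skewCells l m ↔ m p.1 ≤ p.2 ∧ p.2 < l p.1 := by
  simp [skewCells, cells, and_comm]

theorem ite_eq_swap_comp (t : ℕ × ℕ → ℕ) (v : ℕ) :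
    (fun r => if t r = v then v + 1 else if t r = v + 1 then v else t r) =
      swap v (v + 1) ∘ t := by
  funext r
  simp only [comp_apply, swap_apply_def]

theorem cellOf_perm_comp (e : Perm ℕ) (t : ℕ × ℕ → ℕ) (v : ℕ) :
    cellOf l m (e ∘ t) v = cellOf l m t (e.symm v) := by
  simp only [cellOf, invFunOn, comp_apply, eq_symm_apply]

theorem axialDist_swap_comp (t : ℕ × ℕ → ℕ) (j : ℕ) :
    axialDist l m (swap j (j + 1) ∘ t) j = -axialDist l m t j := by
  simp only [axialDist, cellOf_perm_comp, symm_swap, swap_apply_left, swap_apply_right]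
  ring

namespace IsSkewSYT

theorem finite (ht : IsSkewSYT l m n t) : (skewCells l m).Finite :=
  Set.Finite.of_finite_image (ht.1.image_eq ▸ Set.finite_Icc 1 n) ht.1.injOn

theorem exists_cells_of_lt (ht : IsSkewSYT l m n t) {j : ℕ} (hj : 1 ≤ j) (hjn : j < n) :
    ∃ p ∈ skewCells l m, ∃ q ∈ skewCells l m, t p = j ∧ t q = j + 1 := by
  obtain ⟨p, hp, hpj⟩ := ht.1.2.2 (Set.mem_Icc.2 ⟨hj, hjn.le⟩)
  obtain ⟨q, hq, hqj⟩ := ht.1.2.2 (Set.mem_Icc.2 ⟨by omega, hjn⟩ : j + 1 ∈ Set.Icc 1 n)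
  exact ⟨p, hp, q, hq, hpj, hqj⟩

theorem cellOf_apply (ht : IsSkewSYT l m n t) (hp : p ∈ skewCells l m) :
    cellOf l m t (t p) = p :=
  ht.1.injOn.leftInvOn_invFunOn hp

theorem axialDist_eq (ht : IsSkewSYT l m n t) (hp : p ∈ skewCells l m)
    (hq : q ∈ skewCells l m) (hpv : t p = v) (hqv : t q = v + 1) :
    axialDist l m t v = content q - content p := by
  subst hpv
  rw [axialDist, ← hqv, ht.cellOf_apply hp, ht.cellOf_apply hq]

theorem col_lt_of_row_eq (ht : IsSkewSYT l m n t) (hp : p ∈ skewCells l m)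
    (hq : q ∈ skewCells l m) (hpq : t p < t q) (hrow : p.1 = q.1) : p.2 < q.2 := by
  rcases lt_trichotomy p.2 q.2 with h | h | h
  · exact h
  · exact absurd (Prod.ext hrow h ▸ hpq) (lt_irrefl _)
  · exact absurd (ht.2.2.1 q hq p hp hrow.symm h) hpq.not_gt

theorem col_eq_succ_of_row_eq (ht : IsSkewSYT l m n t) (hp : p ∈ skewCells l m)
    (hq : q ∈ skewCells l m) (hpv : t p = v) (hqv : t q = v + 1) (hrow : p.1 = q.1) :
    q.2 = p.2 + 1 := by
  have hlt := ht.col_lt_of_row_eq hp hq (by omega) hrow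
  by_contra hne
  -- skew shapes are convex along rows, so the cell right of `p` lies between `p` and `q`
  have hr : (p.1, p.2 + 1) ∈ skewCells l m := by
    rw [mem_skewCells] at hp hq ⊢
    exact ⟨by simp only; omega, by simp only; rw [hrow]; omega⟩
  have h₁ := ht.2.2.1 p hp _ hr rfl (by simp)
  have h₂ := ht.2.2.1 _ hr q hq hrow (by simp only; omega)
  omega

theorem axialDist_eq_one_of_row_eq (ht : IsSkewSYT l m n t) (hp : p ∈ skewCells l m)
    (hq : q ∈ skewCells l m) (hpv : t p = v) (hqv : t q = v + 1) (hrow : p.1 = q.1) :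
    axialDist l m t v = 1 := by
  have := ht.col_eq_succ_of_row_eq hp hq hpv hqv hrow
  rw [ht.axialDist_eq hp hq hpv hqv, content, content]
  omega

theorem not_swap_comp_of_row_eq (ht : IsSkewSYT l m n t) (hp : p ∈ skewCells l m)
    (hq : q ∈ skewCells l m) (hpv : t p = v) (hqv : t q = v + 1) (hrow : p.1 = q.1) :
    ¬IsSkewSYT l m n (swap v (v + 1) ∘ t) := by
  intro ht'
  have := ht'.2.2.1 p hp q hq hrow (ht.col_lt_of_row_eq hp hq (by omega) hrow)
  simp only [comp_apply, hpv, hqv, swap_apply_left, swap_apply_right] at this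
  omega

theorem swap_comp (ht : IsSkewSYT l m n t) (hp : p ∈ skewCells l m) (hq : q ∈ skewCells l m)
    (hpv : t p = v) (hqv : t q = v + 1) (hrow : p.1 ≠ q.1) (hcol : p.2 ≠ q.2) :
    IsSkewSYT l m n (swap v (v + 1) ∘ t) := by
  have hv : 1 ≤ v ∧ v + 1 ≤ n := ⟨hpv ▸ (ht.1.1 hp).1, hqv ▸ (ht.1.1 hq).2⟩
  have hIcc : Set.BijOn (swap v (v + 1)) (Set.Icc 1 n) (Set.Icc 1 n) := by
    refine ⟨fun x hx => ?_, (swap v (v + 1)).injective.injOn,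
      fun y hy => ⟨swap v (v + 1) y, ?_, swap_apply_self _ _ _⟩⟩
    all_goals
      simp only [Set.mem_Icc, swap_apply_def] at *
      split_ifs <;> omega
  have hmono : ∀ x ∈ skewCells l m, ∀ y ∈ skewCells l m, t x < t y → ¬(x = p ∧ y = q) →
      swap v (v + 1) (t x) < swap v (v + 1) (t y) := by
    intro x hx y hy hxy hne
    refine (swap_lt_swap_iff (fun h => hne ?_) (by omega)).2 hxy
    exact ⟨ht.1.injOn hx hp (h.1.trans hpv.symm), ht.1.injOn hy hq (h.2.trans hqv.symm)⟩
  refine ⟨hIcc.comp ht.1, fun x hx => ?_, fun x hx y hy hrow' hlt => ?_,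
    fun x hx y hy hcol' hlt => ?_⟩
  · simp only [comp_apply, ht.2.1 x hx]
    exact swap_apply_of_ne_of_ne (by omega) (by omega)
  · exact hmono x hx y hy (ht.2.2.1 x hx y hy hrow' hlt) fun h => hrow (h.1 ▸ h.2 ▸ hrow')
  · exact hmono x hx y hy (ht.2.2.2 x hx y hy hcol' hlt) fun h => hcol (h.1 ▸ h.2 ▸ hcol')

theorem apply_eq_ncard (ht : IsSkewSYT l m n t) (hp : p ∈ skewCells l m) :
    t p = {x ∈ skewCells l m | t x ≤ t p}.ncard := by
  have himage : t '' {x ∈ skewCells l m | t x ≤ t p} = Set.Icc 1 (t p) := by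
    ext w
    constructor
    · rintro ⟨x, ⟨hx, hle⟩, rfl⟩
      exact ⟨(ht.1.1 hx).1, hle⟩
    · intro hw
      obtain ⟨x, hx, rfl⟩ := ht.1.2.2 ⟨hw.1, hw.2.trans (ht.1.1 hp).2⟩
      exact ⟨x, ⟨hx, hw.2⟩, rfl⟩
  rw [← (ht.1.injOn.mono (Set.sep_subset _ _)).ncard_image, himage, ← Finset.coe_Icc,
    Set.ncard_coe_finset, Nat.card_Icc, Nat.add_sub_cancel]

end IsSkewSYT

noncomputable def inversions (T : SkewSYT l m n) : Finset ((ℕ × ℕ) × (ℕ × ℕ)) :=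
  (T.2.finite.toFinset ×ˢ T.2.finite.toFinset).filter
    fun x => T.1 x.1 < T.1 x.2 ∧ content x.2 < content x.1

noncomputable def youngCoeff (T : SkewSYT l m n) : ℝ :=
  ∏ x ∈ inversions T, axialFactor (content x.1 - content x.2)

theorem mem_inversions {T : SkewSYT l m n} {x : (ℕ × ℕ) × (ℕ × ℕ)} :
    x ∈ inversions T ↔ x.1 ∈ skewCells l m ∧ x.2 ∈ skewCells l m ∧
      T.1 x.1 < T.1 x.2 ∧ content x.2 < content x.1 := by
  simp only [inversions, Finset.mem_filter, Finset.mem_product, Set.Finite.mem_toFinset,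
    and_assoc]

theorem inversions_of_swap_of_content_lt {T T' : SkewSYT l m n}
    (hT' : T'.1 = swap v (v + 1) ∘ T.1) (hp : p ∈ skewCells l m) (hq : q ∈ skewCells l m)
    (hpv : T.1 p = v) (hqv : T.1 q = v + 1) (hpq : content p < content q) :
    inversions T' = insert (q, p) (inversions T) := by
  have hne : p ≠ q := by rintro rfl; omega
  ext ⟨x, y⟩
  simp only [Finset.mem_insert, Prod.mk.injEq, mem_inversions, hT', comp_apply]
  by_cases hqp : x = q ∧ y = p
  · obtain ⟨rfl, rfl⟩ := hqp
    simp [hp, hq, hpv, hqv, hpq]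
  by_cases hpq' : x = p ∧ y = q
  · obtain ⟨rfl, rfl⟩ := hpq'
    simp [hpv, hqv, hpq.not_gt, hne]
  simp only [hqp, false_or]
  refine and_congr_right fun hx => and_congr_right fun hy => and_congr_left fun _ => ?_
  refine swap_lt_swap_iff (fun h => hpq' ⟨?_, ?_⟩) (fun h => hqp ⟨?_, ?_⟩)
  · exact T.2.1.injOn hx hp (h.1.trans hpv.symm)
  · exact T.2.1.injOn hy hq (h.2.trans hqv.symm)
  · exact T.2.1.injOn hx hq (h.1.trans hqv.symm)
  · exact T.2.1.injOn hy hp (h.2.trans hpv.symm)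

theorem inversions_card_lt_of_descent {T T' : SkewSYT l m n}
    (hT' : T'.1 = swap v (v + 1) ∘ T.1) (hp : p ∈ skewCells l m) (hq : q ∈ skewCells l m)
    (hpv : T.1 p = v) (hqv : T.1 q = v + 1) (hqp : content q < content p) :
    (inversions T').card < (inversions T).card := by
  have hT : T.1 = swap v (v + 1) ∘ T'.1 := by rw [hT', swap_comp_swap_comp]
  rw [inversions_of_swap_of_content_lt hT hq hp (by simp [hT', hqv]) (by simp [hT', hpv]) hqp,
    Finset.card_insert_of_notMem fun hmem => by
      simpa [hT', hpv, hqv] using (mem_inversions.1 hmem).2.2.1]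
  exact Nat.lt_succ_self _

theorem exists_descent_of_lt {T : SkewSYT l m n} {x y : ℕ × ℕ} (hx : x ∈ skewCells l m)
    (hy : y ∈ skewCells l m) (hxy : T.1 x < T.1 y) (hc : content y < content x) :
    ∃ p ∈ skewCells l m, ∃ q ∈ skewCells l m, T.1 q = T.1 p + 1 ∧ content q < content p := by
  obtain ⟨d, hd⟩ := Nat.exists_eq_add_of_lt hxy
  induction d generalizing x with
  | zero => exact ⟨x, hx, y, hy, hd, hc⟩
  | succ d ih =>
    -- the cell `z` holding `T x + 1` forms a descent with `x` or a shorter inversion with `y`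
    obtain ⟨z, hz, hzx⟩ := T.2.1.2.2
      (Set.mem_Icc.2 ⟨by omega, by have := (T.2.1.1 hy).2; omega⟩ : T.1 x + 1 ∈ Set.Icc 1 n)
    rcases lt_or_ge (content z) (content x) with hzc | hzc
    · exact ⟨x, hx, z, hz, hzx, hzc⟩
    · exact ih hz (by omega) (by omega) (by omega)

noncomputable def swapAt (j : ℕ) (T : SkewSYT l m n) : SkewSYT l m n :=
  if h : IsSkewSYT l m n (swap j (j + 1) ∘ T.1) then ⟨_, h⟩ else T

theorem swapAt_of_isSkewSYT {j : ℕ} {T : SkewSYT l m n}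
    (h : IsSkewSYT l m n (swap j (j + 1) ∘ T.1)) : swapAt j T = ⟨_, h⟩ :=
  dif_pos h

theorem swapAt_involutive (j : ℕ) : Involutive (swapAt (l := l) (m := m) (n := n) j) := by
  intro T
  by_cases h : IsSkewSYT l m n (swap j (j + 1) ∘ T.1)
  · rw [swapAt_of_isSkewSYT h, swapAt_of_isSkewSYT (by rw [swap_comp_swap_comp]; exact T.2)]
    exact Subtype.ext (swap_comp_swap_comp j T.1)
  · have hfix : swapAt j T = T := dif_neg h
    rw [hfix, hfix]

theorem axialDist_swapAt_sq (j : ℕ) (T : SkewSYT l m n) :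
    axialDist l m (swapAt j T).1 j ^ 2 = axialDist l m T.1 j ^ 2 := by
  by_cases h : IsSkewSYT l m n (swap j (j + 1) ∘ T.1)
  · rw [swapAt_of_isSkewSYT h, axialDist_swap_comp, neg_sq]
  · rw [swapAt, dif_neg h]

def SwapRecurrence (c : SkewSYT l m n → ℝ) : Prop :=
  ∀ j, 1 ≤ j → j < n → ∀ T T' : SkewSYT l m n, T'.1 = swap j (j + 1) ∘ T.1 →
    c T' = axialFactor (axialDist l m T.1 j) * c T

theorem SwapRecurrence.const_smul {c : SkewSYT l m n → ℝ} (hc : SwapRecurrence c) (a : ℝ) :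
    SwapRecurrence (a • c) := by
  intro j hj hjn T T' hT'
  simp only [Pi.smul_apply, smul_eq_mul, hc j hj hjn T T' hT']
  ring

variable {V : Type} [AddCommGroup V] [Module ℝ V]

def YoungOrthogonalForm (ρ : Representation ℝ (Perm (Fin n)) V) (Φ : SkewSYT l m n → V) : Prop :=
  ∀ (j : ℕ) (hj1 : 1 ≤ j) (hjb : j < n) (T : SkewSYT l m n)
    (p q : ℕ × ℕ), p ∈ skewCells l m → q ∈ skewCells l m →
    T.1 p = j → T.1 q = j + 1 →
    ρ (swap (⟨j - 1, by omega⟩ : Fin n) ⟨j, hjb⟩) (Φ T) =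
      (((((q.2 : ℤ) - (q.1 : ℤ)) - ((p.2 : ℤ) - (p.1 : ℤ))) : ℝ))⁻¹ • Φ T +
      Real.sqrt (1 - ((((((q.2 : ℤ) - (q.1 : ℤ)) - ((p.2 : ℤ) - (p.1 : ℤ))) : ℝ))⁻¹) ^ 2) •
        (if h : IsSkewSYT l m n
            (fun r => if T.1 r = j then j + 1 else if T.1 r = j + 1 then j else T.1 r)
         then Φ ⟨_, h⟩ else 0)

section HorizontalStrip

variable (hL : Antitone l) (hbar : SubDiagram (rowBar l) m)
include hL hbar

theorem col_lt_of_row_lt (hp : p ∈ skewCells l m) (hq : q ∈ skewCells l m) (h : p.1 < q.1) :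
    q.2 < p.2 := by
  rw [mem_skewCells] at hp hq
  calc q.2 < l q.1 := hq.2
    _ ≤ l (p.1 + 1) := hL h
    _ ≤ m p.1 := hbar p.1
    _ ≤ p.2 := hp.1

theorem eq_of_col_eq (hp : p ∈ skewCells l m) (hq : q ∈ skewCells l m) (h : p.2 = q.2) :
    p = q := by
  rcases lt_trichotomy p.1 q.1 with h₁ | h₁ | h₁
  · exact absurd (col_lt_of_row_lt hL hbar hp hq h₁) h.not_gt
  · exact Prod.ext h₁ h
  · exact absurd (col_lt_of_row_lt hL hbar hq hp h₁) h.not_lt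

theorem content_lt_content_iff (hp : p ∈ skewCells l m) (hq : q ∈ skewCells l m) :
    content p < content q ↔ p.2 < q.2 := by
  rcases lt_trichotomy p.1 q.1 with h | h | h
  · have := col_lt_of_row_lt hL hbar hp hq h
    simp only [content]
    omega
  · simp only [content]
    omega
  · have := col_lt_of_row_lt hL hbar hq hp h
    simp only [content]
    omega

theorem content_add_two_le (hp : p ∈ skewCells l m) (hq : q ∈ skewCells l m) (h : p.1 < q.1) :
    content q + 2 ≤ content p := by
  have := col_lt_of_row_lt hL hbar hp hq h
  simp only [content]
  omega

theorem two_le_abs_content_sub (hp : p ∈ skewCells l m) (hq : q ∈ skewCells l m)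
    (h : p.1 ≠ q.1) : 2 ≤ |content q - content p| := by
  rw [le_abs']
  rcases h.lt_or_gt with h | h
  · have := content_add_two_le hL hbar hp hq h
    omega
  · have := content_add_two_le hL hbar hq hp h
    omega

theorem IsSkewSYT.swap_comp_iff (ht : IsSkewSYT l m n t) (hp : p ∈ skewCells l m)
    (hq : q ∈ skewCells l m) (hpv : t p = v) (hqv : t q = v + 1) :
    IsSkewSYT l m n (swap v (v + 1) ∘ t) ↔ p.1 ≠ q.1 := by
  refine ⟨fun h hrow => ht.not_swap_comp_of_row_eq hp hq hpv hqv hrow h, fun hrow => ?_⟩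
  refine ht.swap_comp hp hq hpv hqv hrow fun hcol => ?_
  rw [eq_of_col_eq hL hbar hp hq hcol, hqv] at hpv
  omega

theorem axialDist_eq_one_of_not_isSkewSYT (T : SkewSYT l m n) {j : ℕ} (hj : 1 ≤ j)
    (hjn : j < n) (h : ¬IsSkewSYT l m n (swap j (j + 1) ∘ T.1)) : axialDist l m T.1 j = 1 := by
  obtain ⟨p, hp, q, hq, hpj, hqj⟩ := T.2.exists_cells_of_lt hj hjn
  refine T.2.axialDist_eq_one_of_row_eq hp hq hpj hqj (not_not.1 fun hrow => h ?_)
  exact (T.2.swap_comp_iff hL hbar hp hq hpj hqj).2 hrow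

theorem two_le_abs_axialDist {T T' : SkewSYT l m n} {j : ℕ} (hT' : T'.1 = swap j (j + 1) ∘ T.1)
    (hj : 1 ≤ j) (hjn : j < n) : 2 ≤ |axialDist l m T.1 j| := by
  obtain ⟨p, hp, q, hq, hpj, hqj⟩ := T.2.exists_cells_of_lt hj hjn
  rw [T.2.axialDist_eq hp hq hpj hqj]
  exact two_le_abs_content_sub hL hbar hp hq
    ((T.2.swap_comp_iff hL hbar hp hq hpj hqj).1 (hT' ▸ T'.2))

theorem youngCoeff_pos (T : SkewSYT l m n) : 0 < youngCoeff T := by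
  refine Finset.prod_pos fun x hx => axialFactor_pos ?_
  obtain ⟨hx, hy, hlt, hc⟩ := mem_inversions.1 hx
  have hcol := (content_lt_content_iff hL hbar hy hx).1 hc
  have hrow : x.1.1 < x.2.1 := by
    rcases lt_trichotomy x.1.1 x.2.1 with h | h | h
    · exact h
    · exact absurd (T.2.col_lt_of_row_eq hx hy hlt h) hcol.not_gt
    · exact absurd hcol (col_lt_of_row_lt hL hbar hy hx h).not_gt
  have := content_add_two_le hL hbar hx hy hrow
  exact_mod_cast one_lt_abs_intCast (show 2 ≤ |content x.1 - content x.2| by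
    rw [le_abs']; omega)

theorem youngCoeff_swap {T T' : SkewSYT l m n} (hT' : T'.1 = swap v (v + 1) ∘ T.1)
    (hp : p ∈ skewCells l m) (hq : q ∈ skewCells l m) (hpv : T.1 p = v) (hqv : T.1 q = v + 1) :
    youngCoeff T' = axialFactor (content q - content p) * youngCoeff T := by
  have hr := two_le_abs_content_sub hL hbar hp hq
    ((T.2.swap_comp_iff hL hbar hp hq hpv hqv).1 (hT' ▸ T'.2))
  rcases lt_or_gt_of_ne (show content p ≠ content q by rintro h; simp [h] at hr) with h | h
  · rw [youngCoeff, youngCoeff, inversions_of_swap_of_content_lt hT' hp hq hpv hqv h,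
      Finset.prod_insert fun hmem => by simpa [hpv, hqv] using (mem_inversions.1 hmem).2.2.1]
  · have hT : T.1 = swap v (v + 1) ∘ T'.1 := by rw [hT', swap_comp_swap_comp]
    have hqv' : T'.1 q = v := by simp [hT', hqv]
    have hpv' : T'.1 p = v + 1 := by simp [hT', hpv]
    have hcancel : axialFactor ((content q : ℝ) - content p) *
        axialFactor ((content p : ℝ) - content q) = 1 := by
      rw [← neg_sub (content q : ℝ)]
      exact axialFactor_mul_axialFactor_neg (by exact_mod_cast one_lt_abs_intCast hr)
    rw [youngCoeff, youngCoeff, inversions_of_swap_of_content_lt hT hq hp hqv' hpv' h,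
      Finset.prod_insert fun hmem => by simpa [hpv', hqv'] using (mem_inversions.1 hmem).2.2.1,
      ← mul_assoc, hcancel, one_mul]

theorem youngCoeff_swapRecurrence : SwapRecurrence (youngCoeff (l := l) (m := m) (n := n)) := by
  intro j hj hjn T T' hT'
  obtain ⟨p, hp, q, hq, hpj, hqj⟩ := T.2.exists_cells_of_lt hj hjn
  rw [youngCoeff_swap hL hbar hT' hp hq hpj hqj, T.2.axialDist_eq hp hq hpj hqj]
  push_cast
  rfl

theorem youngCoeff_eq_one {T : SkewSYT l m n} (hT : IncreasingLeftToRight l m T.1) :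
    youngCoeff T = 1 := by
  refine Finset.prod_eq_one fun x hx => ?_
  obtain ⟨hx, hy, hlt, hc⟩ := mem_inversions.1 hx
  exact absurd (hT _ hy _ hx ((content_lt_content_iff hL hbar hy hx).1 hc)) hlt.not_gt

theorem IncreasingLeftToRight.of_inversions_eq_empty {T : SkewSYT l m n}
    (h : inversions T = ∅) : IncreasingLeftToRight l m T.1 := by
  intro p hp q hq hpq
  rcases lt_trichotomy (T.1 p) (T.1 q) with hlt | heq | hgt
  · exact hlt
  · exact absurd (T.2.1.injOn hp hq heq ▸ hpq) (lt_irrefl _)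
  · have : (q, p) ∈ inversions T :=
      mem_inversions.2 ⟨hq, hp, hgt, (content_lt_content_iff hL hbar hp hq).2 hpq⟩
    simp [h] at this

theorem IsSkewSYT.apply_eq_ncard_col_le (ht : IsSkewSYT l m n t)
    (hinc : IncreasingLeftToRight l m t) (hp : p ∈ skewCells l m) :
    t p = {x ∈ skewCells l m | x.2 ≤ p.2}.ncard := by
  rw [ht.apply_eq_ncard hp]
  congr 1
  ext x
  refine and_congr_right fun hx => ⟨fun hle => ?_, fun hle => ?_⟩
  · by_contra hlt
    exact (hinc p hp x hx (not_le.1 hlt)).not_ge hle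
  · rcases hle.lt_or_eq with hlt | heq
    · exact (hinc x hx p hp hlt).le
    · rw [eq_of_col_eq hL hbar hx hp heq]

theorem IncreasingLeftToRight.eq {t t' : ℕ × ℕ → ℕ} (ht : IsSkewSYT l m n t)
    (ht' : IsSkewSYT l m n t') (hinc : IncreasingLeftToRight l m t)
    (hinc' : IncreasingLeftToRight l m t') : t = t' := by
  funext p
  by_cases hp : p ∈ skewCells l m
  · rw [ht.apply_eq_ncard_col_le hL hbar hinc hp, ht'.apply_eq_ncard_col_le hL hbar hinc' hp]
  · rw [ht.2.1 p hp, ht'.2.1 p hp]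

theorem SkewSYT.induction_from_rev {P : SkewSYT l m n → Prop} {Trev : SkewSYT l m n}
    (hTrev : IncreasingLeftToRight l m Trev.1) (hrev : P Trev)
    (hswap : ∀ j, 1 ≤ j → j < n → ∀ T T' : SkewSYT l m n, T'.1 = swap j (j + 1) ∘ T.1 →
      P T' → P T)
    (T : SkewSYT l m n) : P T := by
  induction hk : (inversions T).card using Nat.strong_induction_on generalizing T with
  | _ k ih =>
  rcases (inversions T).eq_empty_or_nonempty with hempty | ⟨⟨x, y⟩, hxy⟩
  · rwa [Subtype.ext (IncreasingLeftToRight.eq hL hbar T.2 Trev.2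
      (.of_inversions_eq_empty hL hbar hempty) hTrev)]
  obtain ⟨hx, hy, hlt, hc⟩ := mem_inversions.1 hxy
  obtain ⟨p, hp, q, hq, hqp, hc'⟩ := exists_descent_of_lt hx hy hlt hc
  have hrow : p.1 ≠ q.1 := fun hrow => by
    have := T.2.col_eq_succ_of_row_eq hp hq rfl hqp hrow
    have := (content_lt_content_iff hL hbar hq hp).1 hc'
    omega
  have hstd := (T.2.swap_comp_iff hL hbar hp hq rfl hqp).2 hrow
  have hv : 1 ≤ T.1 p ∧ T.1 p < n := ⟨(T.2.1.1 hp).1, by have := (T.2.1.1 hq).2; omega⟩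
  exact hswap _ hv.1 hv.2 T ⟨_, hstd⟩ rfl
    (ih _ (hk ▸ inversions_card_lt_of_descent rfl hp hq rfl hqp hc') _ rfl)

theorem SwapRecurrence.ext {c d : SkewSYT l m n → ℝ} (hc : SwapRecurrence c)
    (hd : SwapRecurrence d) {Trev : SkewSYT l m n} (hTrev : IncreasingLeftToRight l m Trev.1)
    (h : c Trev = d Trev) : c = d := by
  funext T
  refine SkewSYT.induction_from_rev (P := fun T => c T = d T) hL hbar hTrev h
    (fun j hj hjn T T' hT' hT'eq => ?_) T
  have hne : axialFactor (axialDist l m T.1 j) ≠ 0 :=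
    (axialFactor_pos (one_lt_abs_intCast (two_le_abs_axialDist hL hbar hT' hj hjn))).ne'
  rw [hc j hj hjn T T' hT', hd j hj hjn T T' hT'] at hT'eq
  exact mul_left_cancel₀ hne hT'eq

theorem YoungOrthogonalForm.apply_basis {ρ : Representation ℝ (Perm (Fin n)) V}
    {Φ : SkewSYT l m n → V} (hΦ : YoungOrthogonalForm ρ Φ) (j : ℕ) (hj : 1 ≤ j) (hjn : j < n)
    (T : SkewSYT l m n) :
    ρ (swap (⟨j - 1, by omega⟩ : Fin n) ⟨j, hjn⟩) (Φ T) =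
      ((axialDist l m T.1 j : ℝ))⁻¹ • Φ T +
        √(1 - ((axialDist l m T.1 j : ℝ))⁻¹ ^ 2) • Φ (swapAt j T) := by
  obtain ⟨p, hp, q, hq, hpj, hqj⟩ := T.2.exists_cells_of_lt hj hjn
  have hr : (axialDist l m T.1 j : ℝ) =
      ((((q.2 : ℤ) - (q.1 : ℤ)) - ((p.2 : ℤ) - (p.1 : ℤ))) : ℝ) := by
    rw [T.2.axialDist_eq hp hq hpj hqj, content, content]
    push_cast
    ring
  rw [hΦ j hj hjn T p q hp hq hpj hqj, hr]
  simp only [ite_eq_swap_comp]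
  by_cases hstd : IsSkewSYT l m n (swap j (j + 1) ∘ T.1)
  · rw [dif_pos hstd, swapAt_of_isSkewSYT hstd]
  · rw [← hr, axialDist_eq_one_of_not_isSkewSYT hL hbar T hj hjn hstd, dif_neg hstd]
    simp

variable [Fintype (SkewSYT l m n)]

theorem sum_smul_mem_invariantsUnder_iff {ρ : Representation ℝ (Perm (Fin n)) V}
    {Φ : Module.Basis (SkewSYT l m n) ℝ V} (hΦ : YoungOrthogonalForm ρ Φ)
    (c : SkewSYT l m n → ℝ) :
    (∑ T, c T • Φ T) ∈ invariantsUnder ρ Set.univ ↔ SwapRecurrence c := by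
  have hgen : ∀ j (hj : 1 ≤ j) (hjn : j < n),
      ρ (swap (⟨j - 1, by omega⟩ : Fin n) ⟨j, hjn⟩) (∑ T, c T • Φ T) = ∑ T, c T • Φ T ↔
        ∀ T T' : SkewSYT l m n, T'.1 = swap j (j + 1) ∘ T.1 →
          c T' = axialFactor (axialDist l m T.1 j) * c T := by
    intro j hj hjn
    have hsq : ∀ T : SkewSYT l m n, √(1 - ((axialDist l m (swapAt j T).1 j : ℝ))⁻¹ ^ 2) =
        √(1 - ((axialDist l m T.1 j : ℝ))⁻¹ ^ 2) := fun T => by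
      rw [inv_pow, inv_pow, ← Int.cast_pow, ← Int.cast_pow, axialDist_swapAt_sq]
    rw [map_sum_smul_of_involutive _ _ (swapAt_involutive j) _ _ hsq
      (hΦ.apply_basis hL hbar j hj hjn), ← Φ.equivFun_symm_apply, ← Φ.equivFun_symm_apply,
      Φ.equivFun.symm.injective.eq_iff, funext_iff]
    constructor
    · intro h T T' hT'
      have hT'eq : swapAt j T = T' := by
        rw [swapAt_of_isSkewSYT (hT' ▸ T'.2)]
        exact Subtype.ext hT'.symm
      have hr := one_lt_abs_intCast (two_le_abs_axialDist hL hbar hT' hj hjn)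
      exact (inv_mul_add_sqrt_mul_eq_iff hr).1 (hT'eq ▸ h T)
    · intro h T
      by_cases hstd : IsSkewSYT l m n (swap j (j + 1) ∘ T.1)
      · have hr := one_lt_abs_intCast
          (two_le_abs_axialDist hL hbar (T' := ⟨_, hstd⟩) rfl hj hjn)
        rw [swapAt_of_isSkewSYT hstd]
        exact (inv_mul_add_sqrt_mul_eq_iff hr).2 (h T _ rfl)
      · have hfix : swapAt j T = T := dif_neg hstd
        rw [hfix, axialDist_eq_one_of_not_isSkewSYT hL hbar T hj hjn hstd]
        simp
  constructor
  · intro h j hj hjn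
    exact (hgen j hj hjn).1 (h _ (Set.mem_univ _))
  · intro h g _
    exact apply_eq_self_of_adjacent_swaps ρ (fun j hj hjn => (hgen j hj hjn).2 (h j hj hjn)) g

theorem invariantsUnder_eq_span {ρ : Representation ℝ (Perm (Fin n)) V}
    {Φ : Module.Basis (SkewSYT l m n) ℝ V} (hΦ : YoungOrthogonalForm ρ Φ)
    {Trev : SkewSYT l m n} (hTrev : IncreasingLeftToRight l m Trev.1) :
    invariantsUnder ρ Set.univ = Submodule.span ℝ {∑ T, youngCoeff T • Φ T} := by
  have hβ := youngCoeff_swapRecurrence (n := n) hL hbar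
  refine le_antisymm (fun w hw => ?_) ?_
  · rw [← Φ.sum_repr w] at hw ⊢
    have hc := (sum_smul_mem_invariantsUnder_iff hL hbar hΦ _).1 hw
    rw [hc.ext hL hbar (hβ.const_smul (Φ.repr w Trev)) hTrev
      (by rw [Pi.smul_apply, youngCoeff_eq_one hL hbar hTrev, smul_eq_mul, mul_one])]
    exact Submodule.mem_span_singleton.2
      ⟨Φ.repr w Trev, by simp only [Finset.smul_sum, Pi.smul_apply, smul_eq_mul, mul_smul]⟩
  · rw [Submodule.span_singleton_le_iff_mem]
    exact (sum_smul_mem_invariantsUnder_iff hL hbar hΦ _).2 hβ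

end HorizontalStrip

/-- For a horizontal strip `λ/μ` (`λ ⊢ b`, `μ ⊢ a`, `λ̄ ⊆ μ ⊆ λ`), with Young's
orthonormal basis `{Φ_T}` of the real skew representation `S^{λ/μ}` (indexed by
standard skew tableaux and satisfying Young's orthogonal form for the Coxeter
generators), the one-dimensional space of `S_{b-a}`-invariants is spanned by the unique
invariant element `Σ_T β_T Φ_T` with `β_{T^rev} = 1`; whenever `T'' = s_i T'` with both
standard, `β_{T''} = √((r-1)/(r+1)) β_{T'}` where `r = r_i(T') ∉ {-1,0,1}` is the axial
distance from `i+1` to `i` in `T'`; and all `β_T` are nonzero. -/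
theorem stmt18 (a b : ℕ) (l m : ℕ → ℕ)
    (hl : IsPartitionOfSize l b)
    (hbar : SubDiagram (rowBar l) m)
    (V : Type) [AddCommGroup V] [Module ℝ V]
    (ρ : Representation ℝ (Equiv.Perm (Fin (b - a))) V)
    [Fintype {t : ℕ × ℕ → ℕ // IsSkewSYT l m (b - a) t}]
    (Φ : Module.Basis {t : ℕ × ℕ → ℕ // IsSkewSYT l m (b - a) t} ℝ V)
    (hΦ : ∀ (j : ℕ) (hj1 : 1 ≤ j) (hjb : j < b - a)
        (T : {t : ℕ × ℕ → ℕ // IsSkewSYT l m (b - a) t})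
        (p q : ℕ × ℕ), p ∈ skewCells l m → q ∈ skewCells l m →
        T.1 p = j → T.1 q = j + 1 →
        ρ (Equiv.swap (⟨j - 1, by omega⟩ : Fin (b - a)) ⟨j, hjb⟩) (Φ T) =
          (((((q.2 : ℤ) - (q.1 : ℤ)) - ((p.2 : ℤ) - (p.1 : ℤ))) : ℝ))⁻¹ • Φ T +
          Real.sqrt (1 - ((((((q.2 : ℤ) - (q.1 : ℤ)) - ((p.2 : ℤ) - (p.1 : ℤ))) : ℝ))⁻¹) ^ 2) •
            (if h : IsSkewSYT l m (b - a)
                (fun r => if T.1 r = j then j + 1 else if T.1 r = j + 1 then j else T.1 r)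
             then Φ ⟨_, h⟩ else 0))
    (Trev : {t : ℕ × ℕ → ℕ // IsSkewSYT l m (b - a) t})
    (hTrev : ∀ p ∈ skewCells l m, ∀ q ∈ skewCells l m, p.2 < q.2 → Trev.1 p < Trev.1 q) :
    (∃! β : {t : ℕ × ℕ → ℕ // IsSkewSYT l m (b - a) t} → ℝ,
      β Trev = 1 ∧ (∑ T, β T • Φ T) ∈ invariantsUnder ρ Set.univ) ∧
    (∀ β : {t : ℕ × ℕ → ℕ // IsSkewSYT l m (b - a) t} → ℝ,
      (β Trev = 1 ∧ (∑ T, β T • Φ T) ∈ invariantsUnder ρ Set.univ) →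
      (invariantsUnder ρ Set.univ = Submodule.span ℝ {∑ T, β T • Φ T}) ∧
      (∀ T, β T ≠ 0) ∧
      (∀ (i : ℕ) (hi1 : 1 ≤ i) (hi2 : i < b - a)
        (T' T'' : {t : ℕ × ℕ → ℕ // IsSkewSYT l m (b - a) t}) (p q : ℕ × ℕ),
        p ∈ skewCells l m → q ∈ skewCells l m → T'.1 p = i → T'.1 q = i + 1 →
        (T''.1 = fun r => if T'.1 r = i then i + 1 else if T'.1 r = i + 1 then i else T'.1 r) →
        ((((q.2 : ℤ) - (q.1 : ℤ)) - ((p.2 : ℤ) - (p.1 : ℤ))) ≠ -1 ∧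
         (((q.2 : ℤ) - (q.1 : ℤ)) - ((p.2 : ℤ) - (p.1 : ℤ))) ≠ 0 ∧
         (((q.2 : ℤ) - (q.1 : ℤ)) - ((p.2 : ℤ) - (p.1 : ℤ))) ≠ 1 ∧
         β T'' = Real.sqrt (((((((q.2 : ℤ) - (q.1 : ℤ)) - ((p.2 : ℤ) - (p.1 : ℤ))) : ℝ)) - 1) /
             ((((((q.2 : ℤ) - (q.1 : ℤ)) - ((p.2 : ℤ) - (p.1 : ℤ))) : ℝ)) + 1)) * β T'))) := by
  have hL : Antitone l := hl.1.1
  have hβ := youngCoeff_swapRecurrence (n := b - a) hL hbar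
  have huniq : ∀ β : SkewSYT l m (b - a) → ℝ,
      β Trev = 1 ∧ (∑ T, β T • Φ T) ∈ invariantsUnder ρ Set.univ → β = youngCoeff := by
    rintro β ⟨h1, hmem⟩
    exact ((sum_smul_mem_invariantsUnder_iff hL hbar hΦ β).1 hmem).ext hL hbar hβ hTrev
      (h1.trans (youngCoeff_eq_one hL hbar hTrev).symm)
  refine ⟨⟨youngCoeff, ⟨youngCoeff_eq_one hL hbar hTrev,
    (sum_smul_mem_invariantsUnder_iff hL hbar hΦ _).2 hβ⟩, huniq⟩, fun β hβspec => ?_⟩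
  obtain rfl := huniq β hβspec
  refine ⟨invariantsUnder_eq_span hL hbar hΦ hTrev, fun T => (youngCoeff_pos hL hbar T).ne',
    fun i _ _ T' T'' p q hp hq hpi hqi hT'' => ?_⟩
  rw [ite_eq_swap_comp] at hT''
  have hr := two_le_abs_content_sub hL hbar hp hq
    ((T'.2.swap_comp_iff hL hbar hp hq hpi hqi).1 (hT'' ▸ T''.2))
  rw [le_abs', content, content] at hr
  refine ⟨by omega, by omega, by omega, ?_⟩
  rw [youngCoeff_swap hL hbar hT'' hp hq hpi hqi]
  push_cast [content]
  rfl
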